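/- Let x = X_1 be the generating operator of the complex group algebra of the free group F_N on N ≥ 1 generators. For every m ≥ 1 there exist natural-number coefficients a_0, a_1, …, a_{⌊m/2⌋} with a_0 = 1 such that x^m = Σ_{i=0}^{⌊m/2⌋} a_i · X_{m−2i} (where X_0 denotes the identity of the algebra); in particular x^m equals X_m plus a nonnegative-integer combination of the operators X_{m−2i} for i ≥ 1. -/

import Mathlib

/-- `Xop N n` is the operator `X_n`: the sum, in the complex group algebra
`ℂ[F_N] = MonoidAlgebra ℂ (FreeGroup (Fin N))`, of the basis elements of all
words `w` whose reduced word has length `n`. Note `Xop N 0 = 1`. -/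
noncomputable def Xop (N n : ℕ) : MonoidAlgebra ℂ (FreeGroup (Fin N)) :=
  ∑ᶠ w ∈ {w : FreeGroup (Fin N) | (FreeGroup.toWord w).length = n},
    MonoidAlgebra.of ℂ (FreeGroup (Fin N)) w

/-- The canonical trace `τ` on `ℂ[F_N]`: the coefficient at the identity. -/
noncomputable def tr {N : ℕ} (a : MonoidAlgebra ℂ (FreeGroup (Fin N))) : ℂ := a.coeff 1

/-!
Left multiplication by a letter `s` changes the reduced length of `g` by `-1` if the reduced
word of `g` starts with `s`, and by `+1` otherwise. Counting letters gives the three-term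
recurrence `x X_n = X_{n+1} + d_n X_{n-1}`, with `d_1 = 2N` and `d_n = 2N - 1` for `n ≥ 2`.
Hence left multiplication by `x` maps `X_m + ℕ-span {X_{m-2i} : i ≥ 1}` into the analogous set
for `m + 1`, and by induction `x^m` lies in it.
-/

open Finset

section ThreeTermRecurrence

variable {R : Type*} [Semiring R] {X : ℕ → R}

def lowerSpan (X : ℕ → R) (m : ℕ) : AddSubmonoid R :=
  AddSubmonoid.closure ((fun i ↦ X (m - 2 * i)) '' Set.Icc 1 (m / 2))

lemma apply_sub_mem_lowerSpan {m i : ℕ} (hi : 1 ≤ i) (him : 2 * i ≤ m) :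
    X (m - 2 * i) ∈ lowerSpan X m :=
  AddSubmonoid.subset_closure ⟨i, ⟨hi, by omega⟩, rfl⟩

lemma exists_sum_eq_of_mem_lowerSpan {m : ℕ} {y : R} (hy : y ∈ lowerSpan X m) :
    ∃ c : ℕ → ℕ, c 0 = 0 ∧ y = ∑ i ∈ range (m / 2 + 1), c i • X (m - 2 * i) := by
  induction hy using AddSubmonoid.closure_induction with
  | mem _ h =>
    obtain ⟨j, ⟨hj, hjm⟩, rfl⟩ := h
    refine ⟨Pi.single j 1, Pi.single_eq_of_ne (by omega) _, ?_⟩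
    simp [Pi.single_apply, hjm]
  | zero => exact ⟨0, rfl, by simp⟩
  | add _ _ _ _ h₁ h₂ =>
    obtain ⟨c₁, hc₁, rfl⟩ := h₁
    obtain ⟨c₂, hc₂, rfl⟩ := h₂
    exact ⟨c₁ + c₂, by simp [hc₁, hc₂], by simp [add_smul, sum_add_distrib]⟩

variable {x : R} {d : ℕ → ℕ}

lemma mul_mem_lowerSpan_succ (hd : d 0 = 0)
    (hrec : ∀ n, x * X n = X (n + 1) + d n • X (n - 1)) {m : ℕ} {y : R}
    (hy : y ∈ lowerSpan X m) : x * y ∈ lowerSpan X (m + 1) := by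
  induction hy using AddSubmonoid.closure_induction with
  | mem _ h =>
    obtain ⟨i, ⟨hi, him⟩, rfl⟩ := h
    rw [hrec]
    refine add_mem ?_ ?_
    · convert apply_sub_mem_lowerSpan (X := X) (m := m + 1) hi (by omega) using 2
      omega
    · obtain h | h := Nat.eq_zero_or_pos (m - 2 * i)
      · simp [h, hd]
      · refine AddSubmonoid.nsmul_mem _ ?_ _
        convert apply_sub_mem_lowerSpan (X := X) (m := m + 1) (i := i + 1) (by omega) (by omega)
          using 2
        omega
  | zero => simp
  | add _ _ _ _ h₁ h₂ => rw [mul_add]; exact add_mem h₁ h₂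

lemma pow_mem_add_lowerSpan (h0 : X 0 = 1) (hd : d 0 = 0)
    (hrec : ∀ n, x * X n = X (n + 1) + d n • X (n - 1)) (m : ℕ) :
    ∃ y ∈ lowerSpan X m, x ^ m = X m + y := by
  induction m with
  | zero => exact ⟨0, zero_mem _, by simp [h0]⟩
  | succ m ih =>
    obtain ⟨y, hy, hxy⟩ := ih
    refine ⟨d m • X (m - 1) + x * y, add_mem ?_ (mul_mem_lowerSpan_succ hd hrec hy), ?_⟩
    · rcases m with _ | m
      · simp [hd]
      · exact AddSubmonoid.nsmul_mem _ (apply_sub_mem_lowerSpan (i := 1) le_rfl (by omega)) _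
    · rw [pow_succ', hxy, mul_add, hrec, add_assoc]

theorem exists_pow_eq_sum_nsmul (h0 : X 0 = 1) (hd : d 0 = 0)
    (hrec : ∀ n, x * X n = X (n + 1) + d n • X (n - 1)) (m : ℕ) :
    ∃ a : ℕ → ℕ, a 0 = 1 ∧ x ^ m = ∑ i ∈ range (m / 2 + 1), a i • X (m - 2 * i) := by
  obtain ⟨y, hy, hxy⟩ := pow_mem_add_lowerSpan h0 hd hrec m
  obtain ⟨c, hc0, rfl⟩ := exists_sum_eq_of_mem_lowerSpan hy
  refine ⟨c + Pi.single 0 1, by simp [hc0], ?_⟩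
  simp [hxy, add_smul, sum_add_distrib, Pi.single_apply, add_comm]

end ThreeTermRecurrence

/-- For `n ≥ 1`, the number of letters `s` of a free group of rank `k` such that `s u` has
length `n`, for any reduced word `u` of length `n - 1`. The value `0` at `n = 0` makes
`x X_0 = X_1` an instance of the recurrence `Xop_one_mul`. -/
def branching (k : ℕ) : ℕ → ℕ
  | 0 => 0
  | 1 => 2 * k
  | _ + 2 => 2 * k - 1

namespace FreeGroup

variable {α : Type*} [DecidableEq α]

lemma norm_mk_singleton_inv_mul (p : α × Bool) (g : FreeGroup α) :
    ((mk [p])⁻¹ * g).norm = if g.toWord.head? = some p then g.norm - 1 else g.norm + 1 := by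
  have hg := reduce_toWord g
  rw [norm, inv_mk, toWord_mul, toWord_mk, norm]
  rcases h : g.toWord with _ | ⟨q, t⟩
  · rfl
  · rw [h] at hg
    have hcancel : (p.1 = q.1 ∧ (!p.2) = !q.2) ↔ q = p := by
      simp [Prod.ext_iff, eq_comm]
    have hinv : invRev [p] = [(p.1, !p.2)] := rfl
    rw [reduce_invRev, reduce_singleton, hinv, List.singleton_append, reduce.cons, hg]
    simp only [hcancel, List.head?_cons, Option.some.injEq]
    split_ifs <;> simp

lemma card_norm_mk_singleton_inv_mul_eq [Fintype α] (g : FreeGroup α) (n : ℕ) :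
    #{p : α × Bool | ((mk [p])⁻¹ * g).norm = n} =
      (if g.norm = n + 1 then 1 else 0) +
        branching (Fintype.card α) n * (if g.norm = n - 1 then 1 else 0) := by
  simp_rw [norm_mk_singleton_inv_mul]
  rcases h : g.toWord with _ | ⟨q, t⟩
  · have hg : g.norm = 0 := by simp [norm, h]
    rcases n with _ | _ | n <;> simp [hg, branching, Fintype.card_prod, mul_comm]
  · have hg : g.norm = t.length + 1 := by simp [norm, h]
    have hrest : ∀ p ∈ ({q}ᶜ : Finset (α × Bool)),
        (if (if (q :: t).head? = some p then g.norm - 1 else g.norm + 1) = n then 1 else 0) =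
          if t.length + 2 = n then 1 else 0 := by
      intro p hp
      rw [mem_compl, mem_singleton] at hp
      simp [hg, Ne.symm hp]
    rw [card_filter, Fintype.sum_eq_add_sum_compl q, sum_congr rfl hrest, sum_const, card_compl,
      card_singleton, Fintype.card_prod, Fintype.card_bool, smul_eq_mul]
    simp only [List.head?_cons, if_true, hg, Nat.add_sub_cancel]
    rcases n with _ | _ | n <;> simp [branching]
    split_ifs <;> omega

lemma finite_setOf_norm_eq [Finite α] (n : ℕ) : {g : FreeGroup α | g.norm = n}.Finite :=
  (List.finite_length_eq _ n).preimage toWord_injective.injOn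

lemma setOf_norm_eq_one : {g : FreeGroup α | g.norm = 1} = Set.range fun p ↦ mk [p] := by
  ext g
  refine ⟨fun hg ↦ ?_, ?_⟩
  · obtain ⟨p, hp⟩ := List.length_eq_one_iff.mp hg
    exact ⟨p, by rw [← mk_toWord (x := g), hp]⟩
  · rintro ⟨p, rfl⟩
    simp [norm, toWord_mk]

lemma mk_singleton_injective : Function.Injective fun p : α × Bool ↦ mk [p] := fun p q h ↦ by
  simpa [toWord_mk] using congrArg toWord h

end FreeGroup

section Xop

open FreeGroup MonoidAlgebra

variable (N : ℕ)

lemma Xop_eq_finsum (n : ℕ) : Xop N n = ∑ᶠ g ∈ {g | g.norm = n}, of ℂ _ g := rfl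

lemma coeff_Xop (n : ℕ) (g : FreeGroup (Fin N)) :
    (Xop N n).coeff g = if g.norm = n then 1 else 0 := by
  rw [Xop_eq_finsum, finsum_mem_eq_finite_toFinset_sum _ (finite_setOf_norm_eq n), coeff_sum]
  simp [Finsupp.finsetSum_apply, of_apply, coeff_single, Finsupp.single_apply]

lemma Xop_zero : Xop N 0 = 1 := by
  ext g
  simp [coeff_Xop, one_def, Finsupp.single_apply, FreeGroup.norm_eq_zero, eq_comm]

lemma Xop_one : Xop N 1 = ∑ p : Fin N × Bool, of ℂ _ (mk [p]) := by
  rw [Xop_eq_finsum, setOf_norm_eq_one, finsum_mem_range mk_singleton_injective,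
    finsum_eq_sum_of_fintype]

lemma Xop_one_mul (n : ℕ) :
    Xop N 1 * Xop N n = Xop N (n + 1) + branching N n • Xop N (n - 1) := by
  ext g
  rw [Xop_one, sum_mul]
  simp only [coeff_sum, Finsupp.finsetSum_apply, of_apply, coeff_single_mul_apply, one_mul,
    coeff_Xop, coeff_add, Finsupp.add_apply, coeff_smul_apply]
  rw [sum_boole, card_norm_mk_singleton_inv_mul_eq, Fintype.card_fin, nsmul_eq_mul]
  simp

end Xop

theorem stmt_17_general (N : ℕ) (m : ℕ) :
    ∃ a : ℕ → ℕ, a 0 = 1 ∧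
      (Xop N 1) ^ m = ∑ i ∈ Finset.range (m / 2 + 1), (a i) • Xop N (m - 2 * i) :=
  exists_pow_eq_sum_nsmul (Xop_zero N) rfl (Xop_one_mul N) m

theorem stmt_17 (N : ℕ) (hN : 1 ≤ N) (m : ℕ) (hm : 1 ≤ m) :
    ∃ a : ℕ → ℕ, a 0 = 1 ∧
      (Xop N 1) ^ m = ∑ i ∈ Finset.range (m / 2 + 1), (a i) • Xop N (m - 2 * i) :=
  stmt_17_general N m
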